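/- arXiv:1312.5270 — 3 statements merged into one kernel-verified Lean document; each statement's English description precedes it below -/
import Mathlib

section
/- For any two invertible commuting measure preserving transformations T₁ and T₂ on a probability space (X, 𝒜, μ) and any two bounded functions f₁, f₂, the limit of ∫ (1/N) Σ_{n=0}^{N-1} f₁(T₁ⁿx) f₂(T₂ⁿx) dμ(x) as N → ∞ equals ∫ E[f₁|ℐ] E[f₂|ℐ] dμ, where ℐ is the σ-algebra of invariant sets of T₂∘T₁⁻¹. -/
open MeasureTheory Filter Topology

/-!
Write `S = T₂ T₁⁻¹` and let `U` be its Koopman operator on `L²(μ)`. Since `T₂ⁿ = Sⁿ T₁ⁿ`,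
substituting `x ↦ T₁ⁿ x` turns the `n`-th term into `∫ f₁ · f₂ ∘ Sⁿ = ⟪f₁, Uⁿ f₂⟫`. By von
Neumann's mean ergodic theorem the averages of `Uⁿ f₂` converge in `L²` to the projection `P f₂`
onto the `U`-fixed subspace, so the limit is `⟪f₁, P f₂⟫ = ⟪P f₁, P f₂⟫`. Finally `P` is the
conditional expectation onto `ℐ`: `P g` agrees a.e. with an `S`-invariant function (its limsup
along orbits), and indicators of invariant sets are `U`-fixed, so `P g` and `g` have the same
integrals over invariant sets.
-/

namespace MeasureTheory

variable {X : Type*} [MeasurableSpace X] {μ : Measure X} {S : X → X}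

noncomputable def koopman (hS : MeasurePreserving S μ μ) : Lp ℝ 2 μ →L[ℝ] Lp ℝ 2 μ :=
  (Lp.compMeasurePreservingₗᵢ ℝ S hS).toContinuousLinearMap

theorem norm_koopman_le_one (hS : MeasurePreserving S μ μ) : ‖koopman hS‖ ≤ 1 :=
  LinearIsometry.norm_toContinuousLinearMap_le _

theorem coeFn_koopman_iterate (hS : MeasurePreserving S μ μ) (g : Lp ℝ 2 μ) (n : ℕ) :
    ⇑((koopman hS)^[n] g) =ᵐ[μ] g ∘ S^[n] := by
  have : (koopman hS)^[n] g = Lp.compMeasurePreserving (S^[n]) (hS.iterate n) g :=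
    congrFun (Lp.compMeasurePreserving_iterate hS n) g
  rw [this]
  exact Lp.coeFn_compMeasurePreserving g _

theorem koopman_indicatorConstLp (hS : MeasurePreserving S μ μ) {s : Set X}
    (hs : MeasurableSet[MeasurableSpace.invariants S] s) (hμs : μ s ≠ ⊤) (c : ℝ) :
    koopman hS (indicatorConstLp 2 hs.1 hμs c) = indicatorConstLp 2 hs.1 hμs c := by
  change Lp.compMeasurePreserving S hS _ = _
  rw [Lp.indicatorConstLp_compMeasurePreserving]
  simp only [hs.2]

theorem exists_measurable_invariants_ae_eq (hS : Measurable S) {φ : X → ℝ} (hφ : Measurable φ)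
    (h : ∀ n, φ ∘ S^[n] =ᵐ[μ] φ) :
    ∃ ψ : X → ℝ, Measurable[MeasurableSpace.invariants S] ψ ∧ φ =ᵐ[μ] ψ := by
  refine ⟨fun x ↦ limsup (fun n ↦ φ (S^[n] x)) atTop, ?_, ?_⟩
  · refine MeasurableSpace.measurable_invariants_dom.2
      ⟨.limsup fun n ↦ hφ.comp (hS.iterate n), fun s _ ↦ ?_⟩
    congr 1
    funext x
    simp only [Function.comp_apply, ← Function.iterate_succ_apply]
    exact limsup_nat_add (fun n ↦ φ (S^[n] x)) 1
  · filter_upwards [ae_all_iff.2 h] with x hx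
    simp only [Function.comp_apply] at hx
    simp only [hx, limsup_const]

theorem starProjection_eqLocus_koopman_ae_eq_condExp [IsFiniteMeasure μ]
    (hS : MeasurePreserving S μ μ) (g : Lp ℝ 2 μ) :
    ((koopman hS).eqLocus (1 : Lp ℝ 2 μ →L[ℝ] Lp ℝ 2 μ)).starProjection g =ᵐ[μ]
      μ[g | MeasurableSpace.invariants S] := by
  set Fix := (koopman hS).eqLocus (1 : Lp ℝ 2 μ →L[ℝ] Lp ℝ 2 μ)
  have hfix : ∀ n, (koopman hS)^[n] (Fix.starProjection g) = Fix.starProjection g := fun n ↦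
    Function.iterate_fixed (Fix.starProjection_apply_mem g) n
  obtain ⟨ψ, hψ, hPψ⟩ := exists_measurable_invariants_ae_eq hS.measurable
    (Lp.stronglyMeasurable _).measurable fun n ↦
      (coeFn_koopman_iterate hS _ n).symm.trans (by rw [hfix])
  refine ae_eq_condExp_of_forall_setIntegral_eq (MeasurableSpace.invariants_le S)
    ((Lp.memLp g).integrable one_le_two)
    (fun _ _ _ ↦ ((Lp.memLp _).integrable one_le_two).integrableOn) (fun s hs _ ↦ ?_)
    ⟨ψ, hψ.stronglyMeasurable, hPψ⟩
  have hs_fix : indicatorConstLp 2 hs.1 (measure_ne_top μ s) (1 : ℝ) ∈ Fix :=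
    koopman_indicatorConstLp hS hs _ 1
  rw [← L2.inner_indicatorConstLp_one hs.1 (measure_ne_top μ s),
    ← L2.inner_indicatorConstLp_one hs.1 (measure_ne_top μ s),
    ← Submodule.inner_starProjection_left_eq_right, Fix.starProjection_eq_self_iff.2 hs_fix]

theorem tendsto_average_integral_mul_comp_iterate [IsFiniteMeasure μ]
    (hS : MeasurePreserving S μ μ) {f₁ f₂ : X → ℝ} (hf₁ : MemLp f₁ 2 μ) (hf₂ : MemLp f₂ 2 μ) :
    Tendsto (fun N : ℕ ↦ (N : ℝ)⁻¹ * ∑ n ∈ Finset.range N, ∫ x, f₁ x * f₂ (S^[n] x) ∂μ) atTop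
      (𝓝 (∫ x, μ[f₁ | MeasurableSpace.invariants S] x *
        μ[f₂ | MeasurableSpace.invariants S] x ∂μ)) := by
  set U := koopman hS
  set Fix := U.eqLocus (1 : Lp ℝ 2 μ →L[ℝ] Lp ℝ 2 μ)
  set g₁ := hf₁.toLp f₁
  set g₂ := hf₂.toLp f₂
  have hcorr : ∀ n, ∫ x, f₁ x * f₂ (S^[n] x) ∂μ = inner ℝ g₁ (U^[n] g₂) := fun n ↦ by
    rw [L2.inner_def]
    refine integral_congr_ae ?_
    filter_upwards [hf₁.coeFn_toLp, (hS.iterate n).quasiMeasurePreserving.ae_eq_comp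
      hf₂.coeFn_toLp, coeFn_koopman_iterate hS g₂ n] with x h₁ h₂ h₃
    simp only [Function.comp_apply] at h₂ h₃
    rw [Real.inner_apply, h₁, h₃, h₂]
  have hlim : inner ℝ g₁ (Fix.starProjection g₂) =
      ∫ x, μ[f₁ | MeasurableSpace.invariants S] x * μ[f₂ | MeasurableSpace.invariants S] x ∂μ := by
    rw [← Fix.starProjection_eq_self_iff.2 (Fix.starProjection_apply_mem g₂),
      ← Submodule.inner_starProjection_left_eq_right, L2.inner_def]
    refine integral_congr_ae ?_
    filter_upwards [starProjection_eqLocus_koopman_ae_eq_condExp hS g₁,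
      starProjection_eqLocus_koopman_ae_eq_condExp hS g₂,
      condExp_congr_ae (m := MeasurableSpace.invariants S) hf₁.coeFn_toLp,
      condExp_congr_ae (m := MeasurableSpace.invariants S) hf₂.coeFn_toLp] with x h₁ h₂ h₁' h₂'
    rw [Real.inner_apply, h₁, h₂, h₁', h₂']
  rw [← hlim]
  refine (tendsto_const_nhds.inner
    (U.tendsto_birkhoffAverage_orthogonalProjection (norm_koopman_le_one hS) g₂)).congr
    fun N ↦ ?_
  simp [birkhoffAverage, birkhoffSum, inner_smul_right, inner_sum, hcorr]

theorem integral_comp_iterate_mul_comp_iterate {T₁ T₂ : Equiv.Perm X}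
    (hT₁ : MeasurePreserving T₁ μ μ) (hS : Measurable ⇑(T₂ * T₁⁻¹)) (hcomm : Commute T₁ T₂)
    {f₁ f₂ : X → ℝ} (hf₁ : Measurable f₁) (hf₂ : Measurable f₂) (n : ℕ) :
    ∫ x, f₁ (T₁^[n] x) * f₂ (T₂^[n] x) ∂μ = ∫ x, f₁ x * f₂ ((⇑(T₂ * T₁⁻¹))^[n] x) ∂μ := by
  have hshift : ∀ x, (⇑(T₂ * T₁⁻¹))^[n] (T₁^[n] x) = T₂^[n] x := fun x ↦ by
    simp only [Equiv.Perm.iterate_eq_pow, ← Equiv.Perm.mul_apply,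
      (hcomm.symm.inv_right).mul_pow, inv_pow, inv_mul_cancel_right]
  have hF : Measurable fun y ↦ f₁ y * f₂ ((⇑(T₂ * T₁⁻¹))^[n] y) :=
    hf₁.mul (hf₂.comp (hS.iterate n))
  calc ∫ x, f₁ (T₁^[n] x) * f₂ (T₂^[n] x) ∂μ
      = ∫ y, f₁ y * f₂ ((⇑(T₂ * T₁⁻¹))^[n] y) ∂(μ.map T₁^[n]) := by
        simp only [← hshift]
        exact (integral_map (hT₁.iterate n).measurable.aemeasurable
          hF.aestronglyMeasurable).symm
    _ = ∫ y, f₁ y * f₂ ((⇑(T₂ * T₁⁻¹))^[n] y) ∂μ := by rw [(hT₁.iterate n).map_eq]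

end MeasureTheory

theorem limit_of_integral_of_nonconventional_averages_general
    {X : Type*} [MeasurableSpace X] (μ : Measure X) [IsProbabilityMeasure μ]
    (T₁ T₂ : Equiv.Perm X)
    (hT₁m' : Measurable T₁.symm)
    (hT₁ : MeasurePreserving T₁ μ μ) (hT₂ : MeasurePreserving T₂ μ μ)
    (hcomm : ∀ x, T₁ (T₂ x) = T₂ (T₁ x))
    (f₁ f₂ : X → ℝ) (hf₁ : Measurable f₁) (hf₂ : Measurable f₂)
    (C : ℝ) (hb₁ : ∀ x, |f₁ x| ≤ C) (hb₂ : ∀ x, |f₂ x| ≤ C) :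
    Tendsto
      (fun N : ℕ => ∫ x,
        (1 / (N : ℝ)) * ∑ n ∈ Finset.range N, f₁ ((⇑T₁)^[n] x) * f₂ ((⇑T₂)^[n] x) ∂μ)
      atTop
      (𝓝 (∫ x,
        (μ[f₁ | MeasurableSpace.invariants (⇑(T₂ * T₁⁻¹))]) x *
        (μ[f₂ | MeasurableSpace.invariants (⇑(T₂ * T₁⁻¹))]) x ∂μ)) := by
  have hS : MeasurePreserving ⇑(T₂ * T₁⁻¹) μ μ := hT₂.comp (hT₁.symm ⟨T₁, hT₁.measurable, hT₁m'⟩)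
  have hm₁ : MemLp f₁ 2 μ := .of_bound hf₁.aestronglyMeasurable C (.of_forall hb₁)
  have hm₂ : MemLp f₂ 2 μ := .of_bound hf₂.aestronglyMeasurable C (.of_forall hb₂)
  have hint : ∀ n, Integrable (fun x ↦ f₁ (T₁^[n] x) * f₂ (T₂^[n] x)) μ := fun n ↦
    (hm₁.comp_measurePreserving (hT₁.iterate n)).integrable_mul
      (hm₂.comp_measurePreserving (hT₂.iterate n))
  refine (tendsto_average_integral_mul_comp_iterate hS hm₁ hm₂).congr fun N ↦ ?_
  rw [integral_const_mul, integral_finsetSum _ fun n _ ↦ hint n, one_div]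
  simp_rw [integral_comp_iterate_mul_comp_iterate hT₁ hS.measurable (Equiv.ext hcomm) hf₁ hf₂]

/-- For two invertible commuting measure preserving transformations `T₁, T₂` on a
probability space and bounded measurable `f₁, f₂`, the integrals of the averages
`(1/N) ∑_{n<N} f₁(T₁ⁿ x) f₂(T₂ⁿ x)` converge to `∫ E[f₁|ℐ] E[f₂|ℐ] dμ`, where `ℐ`
is the σ-algebra of invariant sets of `T₂ ∘ T₁⁻¹`. -/
theorem limit_of_integral_of_nonconventional_averages
    {X : Type*} [MeasurableSpace X] (μ : Measure X) [IsProbabilityMeasure μ]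
    (T₁ T₂ : Equiv.Perm X)
    (hT₁m : Measurable T₁) (hT₁m' : Measurable T₁.symm)
    (hT₂m : Measurable T₂) (hT₂m' : Measurable T₂.symm)
    (hT₁ : MeasurePreserving T₁ μ μ) (hT₂ : MeasurePreserving T₂ μ μ)
    (hcomm : ∀ x, T₁ (T₂ x) = T₂ (T₁ x))
    (f₁ f₂ : X → ℝ) (hf₁ : Measurable f₁) (hf₂ : Measurable f₂)
    (C : ℝ) (hb₁ : ∀ x, |f₁ x| ≤ C) (hb₂ : ∀ x, |f₂ x| ≤ C) :
    Tendsto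
      (fun N : ℕ => ∫ x,
        (1 / (N : ℝ)) * ∑ n ∈ Finset.range N, f₁ ((⇑T₁)^[n] x) * f₂ ((⇑T₂)^[n] x) ∂μ)
      atTop
      (𝓝 (∫ x,
        (μ[f₁ | MeasurableSpace.invariants (⇑(T₂ * T₁⁻¹))]) x *
        (μ[f₂ | MeasurableSpace.invariants (⇑(T₂ * T₁⁻¹))]) x ∂μ)) :=
  limit_of_integral_of_nonconventional_averages_general μ T₁ T₂ hT₁m' hT₁ hT₂ hcomm f₁ f₂ hf₁ hf₂ C
    hb₁ hb₂
end

section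
/- Let Φ be a measurable invertible transformation of (Y, ℬ) and M₂(Y, Φ) = {γ probability : γ(Φ^{-1}A) ≤ 2γ(A) ∀A}. If γ is an extreme point of M₂(Y, Φ), then γ is ergodic in the sense that every Φ-invariant measurable set E satisfies γ(E) ∈ {0, 1}. -/
open MeasureTheory ProbabilityTheory
open scoped ENNReal

/-!
If `γ(E) ∈ (0, 1)` for a `Φ`-invariant set `E`, then `γ` is the convex combination
`γ(E) • γ[|E] + (1 - γ(E)) • γ[|Eᶜ]` of its conditionings on `E` and `Eᶜ`. Invariance of `E`
makes conditioning on it commute with taking preimages under `Φ`, so both conditional measures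
lie in `M₂(Y, Φ)`; they differ (they give `E` mass `1` and `0`), contradicting extremality.
-/

namespace ProbabilityTheory

variable {Ω : Type*} [MeasurableSpace Ω] {μ : Measure Ω} {s : Set Ω}

lemma eq_smul_cond_add_smul_cond_compl [IsProbabilityMeasure μ] (hs : MeasurableSet s) :
    μ = μ s • μ[|s] + (1 - μ s) • μ[|sᶜ] := by
  ext t
  rw [← prob_compl_eq_one_sub hs, Measure.add_apply, Measure.smul_apply, Measure.smul_apply,
    smul_eq_mul, smul_eq_mul, mul_comm, mul_comm (μ sᶜ), cond_add_cond_compl_eq hs]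

lemma cond_ne_cond_compl [IsFiniteMeasure μ] (hs : MeasurableSet s) (hμs : μ s ≠ 0) :
    μ[|s] ≠ μ[|sᶜ] := by
  intro h
  have hcompl : μ[s | sᶜ] = 0 := by simp [cond_apply hs.compl]
  rw [← h, cond_apply_self hμs (measure_ne_top μ s)] at hcompl
  exact one_ne_zero hcompl

lemma cond_preimage_le_of_preimage_eq {f : Ω → Ω} {K : ℝ≥0∞}
    (h : ∀ A, MeasurableSet A → μ (f ⁻¹' A) ≤ K * μ A) (hs : MeasurableSet s)
    (hfs : f ⁻¹' s = s) : ∀ A, MeasurableSet A → μ[f ⁻¹' A | s] ≤ K * μ[A | s] := by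
  intro A hA
  have hpre : s ∩ f ⁻¹' A = f ⁻¹' (s ∩ A) := by rw [Set.preimage_inter, hfs]
  rw [cond_apply hs, cond_apply hs, hpre, mul_left_comm]
  gcongr
  exact h _ (hs.inter hA)

end ProbabilityTheory

theorem ergodic_of_extreme_point_M2_general
    {Y : Type*} [MeasurableSpace Y]
    (Φ : Equiv.Perm Y)
    (γ : Measure Y) [IsProbabilityMeasure γ]
    (hγ : ∀ A : Set Y, MeasurableSet A → γ (⇑Φ ⁻¹' A) ≤ 2 * γ A)
    (hext : ∀ γ₁ γ₂ : Measure Y,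
      (IsProbabilityMeasure γ₁ ∧ ∀ A : Set Y, MeasurableSet A → γ₁ (⇑Φ ⁻¹' A) ≤ 2 * γ₁ A) →
      (IsProbabilityMeasure γ₂ ∧ ∀ A : Set Y, MeasurableSet A → γ₂ (⇑Φ ⁻¹' A) ≤ 2 * γ₂ A) →
      ∀ t : ℝ≥0∞, 0 < t → t < 1 → γ = t • γ₁ + (1 - t) • γ₂ → γ₁ = γ₂) :
    ∀ E : Set Y, MeasurableSet E → ⇑Φ ⁻¹' E = E → γ E = 0 ∨ γ E = 1 := by
  intro E hE hinv
  by_contra! hmid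
  have hlt : γ E < 1 := prob_le_one.lt_of_ne hmid.2
  have hcompl : γ Eᶜ ≠ 0 := by
    rw [prob_compl_eq_one_sub hE]
    exact (tsub_pos_of_lt hlt).ne'
  have hinv_compl : ⇑Φ ⁻¹' Eᶜ = Eᶜ := by rw [Set.preimage_compl, hinv]
  refine cond_ne_cond_compl hE hmid.1 (hext _ _ ?_ ?_ (γ E) (pos_iff_ne_zero.2 hmid.1) hlt
    (eq_smul_cond_add_smul_cond_compl hE))
  · exact ⟨cond_isProbabilityMeasure hmid.1, cond_preimage_le_of_preimage_eq hγ hE hinv⟩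
  · exact ⟨cond_isProbabilityMeasure hcompl,
      cond_preimage_le_of_preimage_eq hγ hE.compl hinv_compl⟩

/-- If `γ` is an extreme point of the convex set `M₂(Y, Φ)` of probability measures
satisfying `γ(Φ⁻¹A) ≤ 2γ(A)`, then `γ` is ergodic: every `Φ`-invariant measurable set
has `γ`-measure `0` or `1`. -/
theorem ergodic_of_extreme_point_M2
    {Y : Type*} [MeasurableSpace Y]
    (Φ : Equiv.Perm Y) (hΦm : Measurable Φ) (hΦm' : Measurable Φ.symm)
    (γ : Measure Y) [IsProbabilityMeasure γ]
    (hγ : ∀ A : Set Y, MeasurableSet A → γ (⇑Φ ⁻¹' A) ≤ 2 * γ A)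
    (hext : ∀ γ₁ γ₂ : Measure Y,
      (IsProbabilityMeasure γ₁ ∧ ∀ A : Set Y, MeasurableSet A → γ₁ (⇑Φ ⁻¹' A) ≤ 2 * γ₁ A) →
      (IsProbabilityMeasure γ₂ ∧ ∀ A : Set Y, MeasurableSet A → γ₂ (⇑Φ ⁻¹' A) ≤ 2 * γ₂ A) →
      ∀ t : ℝ≥0∞, 0 < t → t < 1 → γ = t • γ₁ + (1 - t) • γ₂ → γ₁ = γ₂) :
    ∀ E : Set Y, MeasurableSet E → ⇑Φ ⁻¹' E = E → γ E = 0 ∨ γ E = 1 :=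
  ergodic_of_extreme_point_M2_general Φ γ hγ hext
end

section
/- (Furstenberg–Katznelson positivity consequence) Let T₁, T₂ be commuting invertible measure preserving transformations on (X, 𝒜, μ) and V ∈ 𝒜 with μ(V) > 0. Let R(1_V ⊗ 1_V) denote the L¹(μ)-limit of (1/N) Σ_{n=0}^{N-1} 1_V(T₁ⁿx) 1_V(T₂ⁿx). Then the function R(1_V ⊗ 1_V) is strictly positive μ-a.e. on V. -/
/-!
If `R` were not positive a.e. on `V`, it would be `≤ 0` on some `W ⊆ V` of positive measure.
But `∫_W R` is the limit of the integrals over `W` of the averages, and these dominate the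
averages of `μ(W ∩ T₁⁻ⁿW ∩ T₂⁻ⁿW)`, which are bounded below by a positive constant: this is the
Furstenberg–Katznelson multiple recurrence theorem, which follows from the corners theorem.

Count, for each `x`, the pairs `(a, b) ∈ [M]²` with `T₁ᵃ T₂ᵇ x ∈ W`; on average there are
`μ(W) M²` of them. Whenever there are at least `δ M²`, the corners theorem gives a corner
`(a, b), (a + d, b), (a, b + d)` with `0 < d < M`, i.e. `T₁ᵃ T₂ᵇ x ∈ W ∩ T₁⁻ᵈW ∩ T₂⁻ᵈW`.
Integrating, `μ W ≤ δ + M² ∑_{d ≤ M} μ(W ∩ T₁⁻ᵈW ∩ T₂⁻ᵈW)`. Applied to `T₁ᵗ, T₂ᵗ` for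
`t ≤ N / M` and summed over `t`, this bounds the averages up to `N` from below.
-/

open MeasureTheory Filter Topology Finset

/-- `IsCornerFree` also excludes corners `(x, y), (x - d, y), (x, y - d)` with `d > 0`. -/
lemma exists_pos_corner_of_not_isCornerFree {A B : Set (ℕ × ℕ)} {v : ℕ × ℕ} (hBA : B ⊆ A)
    (hB : ∀ p ∈ B, ∃ q ∈ A, p + q = v) (hB' : ¬ IsCornerFree B) :
    ∃ x y d, 0 < d ∧ (x, y) ∈ A ∧ (x + d, y) ∈ A ∧ (x, y + d) ∈ A := by
  simp only [IsCornerFree, not_forall] at hB'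
  obtain ⟨x₁, y₁, x₂, y₂, ⟨h₁₁, h₁₂, h₂₁, hadd⟩, hne⟩ := hB'
  rcases Nat.lt_or_gt_of_ne hne with hlt | hlt
  · refine ⟨x₁, y₁, x₂ - x₁, by omega, hBA h₁₁, ?_, ?_⟩
    · convert hBA h₂₁ using 2; omega
    · convert hBA h₁₂ using 2; omega
  -- a corner of `B` pointing the other way reflects through `v` to an upward corner of `A`
  · obtain ⟨⟨a, b⟩, hq₁₁, hv₁₁⟩ := hB _ h₁₁
    obtain ⟨q₁₂, hq₁₂, hv₁₂⟩ := hB _ h₁₂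
    obtain ⟨q₂₁, hq₂₁, hv₂₁⟩ := hB _ h₂₁
    subst hv₁₁
    simp only [Prod.ext_iff, Prod.fst_add, Prod.snd_add] at hv₁₂ hv₂₁
    refine ⟨a, b, x₁ - x₂, by omega, hq₁₁, ?_, ?_⟩
    · convert hq₂₁ using 1; ext <;> simp <;> omega
    · convert hq₁₂ using 1; ext <;> simp <;> omega

theorem oriented_corners_theorem_nat {ε : ℝ} {n : ℕ} (hε : 0 < ε)
    (hn : cornersTheoremBound (ε ^ 2 / 4 / 9) ≤ n) (A : Finset (ℕ × ℕ))
    (hAn : A ⊆ range n ×ˢ range n) (hAε : ε * n ^ 2 ≤ #A) :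
    ∃ x y d, 0 < d ∧ (x, y) ∈ A ∧ (x + d, y) ∈ A ∧ (x, y + d) ∈ A := by
  have hn0 : 0 < n := lt_of_lt_of_le (Nat.succ_pos _) hn
  have hmaps : ∀ pq ∈ A ×ˢ A, pq.1 + pq.2 ∈ range (2 * n) ×ˢ range (2 * n) := by
    rintro ⟨⟨a, b⟩, ⟨c, d⟩⟩ h
    simp only [mem_product] at h
    have := hAn h.1; have := hAn h.2
    simp_all only [mem_product, mem_range, Prod.mk_add_mk]
    omega
  have hcount : #(range (2 * n) ×ˢ range (2 * n)) • (ε ^ 2 / 4 * n ^ 2) ≤ (#(A ×ˢ A) : ℝ) := by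
    rw [card_product, card_product, card_range, nsmul_eq_mul]
    push_cast
    nlinarith [mul_le_mul hAε hAε (by positivity) (by positivity : (0:ℝ) ≤ #A)]
  obtain ⟨v, -, hv⟩ := exists_le_card_fiber_of_nsmul_le_card_of_maps_to hmaps
    ⟨(0, 0), by simp [hn0]⟩ hcount
  set F := {pq ∈ A ×ˢ A | pq.1 + pq.2 = v}
  have hinj : Set.InjOn Prod.fst (F : Set ((ℕ × ℕ) × (ℕ × ℕ))) := by
    rintro ⟨p, q⟩ hpq ⟨p', q'⟩ hpq' (rfl : p = p')
    simp only [F, coe_filter, Set.mem_ofPred_eq] at hpq hpq'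
    simp only [Prod.mk.injEq, true_and]
    exact add_left_cancel (hpq.2.trans hpq'.2.symm)
  have hFA : F.image Prod.fst ⊆ A := by
    intro p hp
    obtain ⟨pq, hpq, rfl⟩ := mem_image.1 hp
    exact (mem_product.1 (mem_filter.1 hpq).1).1
  refine exists_pos_corner_of_not_isCornerFree (B := F.image Prod.fst) (v := v)
    (by exact_mod_cast hFA) ?_ ?_
  · intro p hp
    obtain ⟨pq, hpq, rfl⟩ := mem_image.1 hp
    exact ⟨pq.2, (mem_product.1 (mem_filter.1 hpq).1).2, (mem_filter.1 hpq).2⟩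
  · refine corners_theorem_nat (ε := ε ^ 2 / 4) (by positivity) hn _ ?_ ?_
    · exact hFA.trans hAn
    · rw [card_image_of_injOn hinj]; exact hv

lemma sum_Icc_sum_Icc_mul_le {α : Type*} [AddCommMonoid α] [PartialOrder α] [IsOrderedAddMonoid α]
    {a : ℕ → α} (ha : ∀ n, 0 ≤ a n) (T M : ℕ) :
    ∑ t ∈ Icc 1 T, ∑ d ∈ Icc 1 M, a (t * d) ≤ M • ∑ n ∈ Icc 1 (T * M), a n := by
  rw [sum_comm]
  calc ∑ d ∈ Icc 1 M, ∑ t ∈ Icc 1 T, a (t * d)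
      ≤ ∑ _d ∈ Icc 1 M, ∑ n ∈ Icc 1 (T * M), a n := sum_le_sum fun d hd => ?_
    _ = M • ∑ n ∈ Icc 1 (T * M), a n := by simp
  obtain ⟨hd, hdM⟩ := mem_Icc.1 hd
  rw [← sum_image fun t _ t' _ h => Nat.eq_of_mul_eq_mul_right hd h]
  refine sum_le_sum_of_subset_of_nonneg (image_subset_iff.2 fun t ht => ?_) fun _ _ _ => ha _
  obtain ⟨ht, htT⟩ := mem_Icc.1 ht
  exact mem_Icc.2 ⟨Nat.one_le_iff_ne_zero.2 (by positivity), Nat.mul_le_mul htT hdM⟩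

lemma mul_le_mul_sum_range_of_le_sum_Icc_mul {a : ℕ → ℝ} (ha : ∀ n, 0 ≤ a n) {M : ℕ} {δ : ℝ}
    (hδ : 0 ≤ δ) (h : ∀ t, δ ≤ ∑ d ∈ Icc 1 M, a (t * d)) {N : ℕ} (hN : M < N) :
    δ * N ≤ 2 * M ^ 2 * ∑ n ∈ range N, a n := by
  rcases M.eq_zero_or_pos with rfl | hM
  · simp [le_antisymm (by simpa using h 0) hδ]
  set T := (N - 1) / M
  have hT : 1 ≤ T := (Nat.one_le_div_iff hM).2 (by omega)
  have hTM : T * M ≤ N - 1 := Nat.div_mul_le_self (N - 1) M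
  have hNT : N ≤ 2 * (T * M) := by
    have : N - 1 < T * M + M := Nat.lt_div_mul_add hM
    have : M ≤ T * M := Nat.le_mul_of_pos_left M hT
    omega
  have hS : T * δ ≤ M * ∑ n ∈ range N, a n := calc
    T * δ ≤ ∑ t ∈ Icc 1 T, ∑ d ∈ Icc 1 M, a (t * d) := by
      simpa using card_nsmul_le_sum (Icc 1 T) _ δ fun t _ => h t
    _ ≤ M * ∑ n ∈ Icc 1 (T * M), a n := by simpa using sum_Icc_sum_Icc_mul_le ha T M
    _ ≤ M * ∑ n ∈ range N, a n := by
      gcongr ?_ * ?_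
      refine sum_le_sum_of_subset_of_nonneg (fun n hn => ?_) fun _ _ _ => ha _
      simp only [mem_Icc, mem_range] at hn ⊢
      omega
  calc δ * N ≤ δ * (2 * (T * M)) := by gcongr; exact_mod_cast hNT
    _ = 2 * M * (T * δ) := by ring
    _ ≤ 2 * M * (M * ∑ n ∈ range N, a n) := by gcongr
    _ = 2 * M ^ 2 * ∑ n ∈ range N, a n := by ring

section

variable {X ι Y : Type*} {g : ι → X → Y} {E : ι → Set Y}

open Classical in
lemma natCast_card_filter_mem_eq_sum_indicator (s : Finset ι) (x : X) :
    (#{i ∈ s | g i x ∈ E i} : ℝ) = ∑ i ∈ s, (g i ⁻¹' E i).indicator 1 x := by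
  simp only [natCast_card_filter, Set.indicator_apply, Set.mem_preimage, Pi.one_apply]

variable [MeasurableSpace X] [MeasurableSpace Y] {μ : Measure X} {ν : Measure Y}

open Classical in
lemma integrable_card_filter_mem [IsFiniteMeasure μ] (s : Finset ι) (hg : ∀ i, Measurable (g i))
    (hE : ∀ i, MeasurableSet (E i)) :
    Integrable (fun x => (#{i ∈ s | g i x ∈ E i} : ℝ)) μ := by
  simp only [natCast_card_filter_mem_eq_sum_indicator]
  exact integrable_finsetSum _ fun i _ => (integrable_const 1).indicator ((hg i) (hE i))

open Classical in
lemma integral_card_filter_mem [IsFiniteMeasure μ] (s : Finset ι)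
    (hg : ∀ i, MeasurePreserving (g i) μ ν) (hE : ∀ i, MeasurableSet (E i)) :
    ∫ x, (#{i ∈ s | g i x ∈ E i} : ℝ) ∂μ = ∑ i ∈ s, ν.real (E i) := by
  simp only [natCast_card_filter_mem_eq_sum_indicator]
  rw [integral_finsetSum _ fun i _ => (integrable_const 1).indicator ((hg i).measurable (hE i))]
  refine sum_congr rfl fun i _ => ?_
  rw [integral_indicator_one ((hg i).measurable (hE i)),
    (hg i).measureReal_preimage (hE i).nullMeasurableSet]

lemma tendsto_setIntegral_of_tendsto_integral_abs_sub {ι : Type*} {l : Filter ι}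
    {F : ι → X → ℝ} {f : X → ℝ} (hF : ∀ i, Integrable (F i) μ) (hf : Integrable f μ)
    (h : Tendsto (fun i => ∫ x, |F i x - f x| ∂μ) l (𝓝 0)) (s : Set X) :
    Tendsto (fun i => ∫ x in s, F i x ∂μ) l (𝓝 (∫ x in s, f x ∂μ)) := by
  refine tendsto_setIntegral_of_L1 f hf.1 (Eventually.of_forall hF) ?_ s
  have := ENNReal.tendsto_ofReal h
  rw [ENNReal.ofReal_zero] at this
  refine this.congr fun i => ?_
  exact ofReal_integral_norm_eq_lintegral_enorm ((hF i).sub hf)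

lemma ae_restrict_pos_of_forall_setIntegral_pos {R : X → ℝ} {V : Set X}
    (hR : AEStronglyMeasurable R μ) (hV : MeasurableSet V)
    (h : ∀ W ⊆ V, MeasurableSet W → 0 < μ W → 0 < ∫ x in W, R x ∂μ) :
    ∀ᵐ x ∂μ.restrict V, 0 < R x := by
  set W := {x | hR.mk R x ≤ 0} ∩ V
  have hW : MeasurableSet W :=
    (measurableSet_le hR.stronglyMeasurable_mk.measurable measurable_const).inter hV
  have hW0 : μ W = 0 := by
    by_contra hW0
    refine (h W Set.inter_subset_right hW (pos_iff_ne_zero.2 hW0)).not_ge ?_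
    rw [setIntegral_congr_ae hW (hR.ae_eq_mk.mono fun x hx _ => hx)]
    exact setIntegral_nonpos hW fun x hx => hx.1
  rw [ae_restrict_iff' hV]
  filter_upwards [hR.ae_eq_mk, measure_eq_zero_iff_ae_notMem.1 hW0] with x hx hxW hxV
  rw [hx]
  by_contra! hle
  exact hxW ⟨hle, hxV⟩

end

section Recurrence

variable {X : Type*} {S₁ S₂ : X → X} {W : Set X}

def returnSet (S₁ S₂ : X → X) (W : Set X) (n : ℕ) : Set X := W ∩ S₁^[n] ⁻¹' W ∩ S₂^[n] ⁻¹' W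

lemma returnSet_iterate (S₁ S₂ : X → X) (W : Set X) (t n : ℕ) :
    returnSet S₁^[t] S₂^[t] W n = returnSet S₁ S₂ W (t * n) := by
  simp only [returnSet, Function.iterate_mul]

lemma iterate_comp_iterate_mem_returnSet (hc : Function.Commute S₁ S₂) {x : X} {a b d : ℕ}
    (h : (S₁^[a] ∘ S₂^[b]) x ∈ W) (h₁ : (S₁^[a + d] ∘ S₂^[b]) x ∈ W)
    (h₂ : (S₁^[a] ∘ S₂^[b + d]) x ∈ W) : (S₁^[a] ∘ S₂^[b]) x ∈ returnSet S₁ S₂ W d := by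
  refine ⟨⟨h, ?_⟩, ?_⟩
  · simpa [add_comm a d, Function.iterate_add_apply] using h₁
  · simpa [add_comm b d, Function.iterate_add_apply, (hc.iterate_iterate a d).eq] using h₂

open Classical in
lemma card_filter_mem_le_add_card_filter_mem_returnSet (hc : Function.Commute S₁ S₂) {M : ℕ}
    {δ : ℝ} (hδ : 0 ≤ δ) (hcorner : ∀ A ⊆ range M ×ˢ range M, δ * M ^ 2 ≤ #A →
      ∃ x y d, 0 < d ∧ (x, y) ∈ A ∧ (x + d, y) ∈ A ∧ (x, y + d) ∈ A) (x : X) :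
    (#{p ∈ range M ×ˢ range M | (S₁^[p.1] ∘ S₂^[p.2]) x ∈ W} : ℝ) ≤ δ * M ^ 2 +
      M ^ 2 * #{q ∈ (range M ×ˢ range M) ×ˢ Icc 1 M |
        (S₁^[q.1.1] ∘ S₂^[q.1.2]) x ∈ returnSet S₁ S₂ W q.2} := by
  set A := {p ∈ range M ×ˢ range M | (S₁^[p.1] ∘ S₂^[p.2]) x ∈ W}
  by_cases hA : δ * M ^ 2 ≤ #A
  · obtain ⟨a, b, d, hd, h, h₁, h₂⟩ := hcorner A (filter_subset _ _) hA
    simp only [A, mem_filter, mem_product, mem_range] at h h₁ h₂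
    have hret : 1 ≤ #{q ∈ (range M ×ˢ range M) ×ˢ Icc 1 M |
        (S₁^[q.1.1] ∘ S₂^[q.1.2]) x ∈ returnSet S₁ S₂ W q.2} :=
      card_pos.2 ⟨((a, b), d), mem_filter.2 ⟨by simp only [mem_product, mem_range, mem_Icc]; omega,
        iterate_comp_iterate_mem_returnSet hc h.2 h₁.2 h₂.2⟩⟩
    have hAM : #A ≤ M ^ 2 := (card_filter_le _ _).trans (by simp [sq])
    calc (#A : ℝ) ≤ M ^ 2 * 1 := by rw [mul_one]; exact_mod_cast hAM
      _ ≤ δ * M ^ 2 + M ^ 2 * _ :=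
        le_add_of_nonneg_of_le (by positivity) (by gcongr; exact Nat.one_le_cast.2 hret)
  · exact (not_le.1 hA).le.trans (le_add_of_nonneg_right (by positivity))

variable [MeasurableSpace X] {μ : Measure X}

lemma measurableSet_returnSet (h₁ : Measurable S₁) (h₂ : Measurable S₂) (hW : MeasurableSet W)
    (n : ℕ) : MeasurableSet (returnSet S₁ S₂ W n) :=
  (hW.inter (h₁.iterate n hW)).inter (h₂.iterate n hW)

variable [IsProbabilityMeasure μ]

theorem measureReal_le_add_sum_returnSet (h₁ : MeasurePreserving S₁ μ μ)
    (h₂ : MeasurePreserving S₂ μ μ) (hc : Function.Commute S₁ S₂) (hW : MeasurableSet W)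
    {M : ℕ} {δ : ℝ} (hcorner : ∀ A ⊆ range M ×ˢ range M, δ * M ^ 2 ≤ #A →
      ∃ x y d, 0 < d ∧ (x, y) ∈ A ∧ (x + d, y) ∈ A ∧ (x, y + d) ∈ A) :
    μ.real W ≤ δ + M ^ 2 * ∑ d ∈ Icc 1 M, μ.real (returnSet S₁ S₂ W d) := by
  classical
  have hδM : 0 < δ * M ^ 2 := by
    by_contra! h
    obtain ⟨x, y, d, -, hxy, -⟩ := hcorner ∅ (empty_subset _) (by simpa using h)
    simp at hxy
  have hM : (0 : ℝ) < M ^ 2 := by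
    rcases M.eq_zero_or_pos with rfl | hM
    · simp at hδM
    · positivity
  have hg (p : ℕ × ℕ) : MeasurePreserving (S₁^[p.1] ∘ S₂^[p.2]) μ μ :=
    (h₁.iterate p.1).comp (h₂.iterate p.2)
  have hC := measurableSet_returnSet h₁.measurable h₂.measurable hW
  have hreturns_integrable :=
    integrable_card_filter_mem (μ := μ) ((range M ×ˢ range M) ×ˢ Icc 1 M)
      (fun q => (hg q.1).measurable) fun q => hC q.2
  have hint := integral_mono (integrable_card_filter_mem _ (fun p => (hg p).measurable) fun _ => hW)
    ((integrable_const _).add (hreturns_integrable.const_mul _))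
    (card_filter_mem_le_add_card_filter_mem_returnSet hc (pos_of_mul_pos_left hδM hM.le).le hcorner)
  have hreturns_integral :=
    integral_card_filter_mem (μ := μ) ((range M ×ˢ range M) ×ˢ Icc 1 M)
      (g := fun q => S₁^[q.1.1] ∘ S₂^[q.1.2]) (fun q => hg q.1) fun q => hC q.2
  beta_reduce at hreturns_integral
  rw [integral_add' (integrable_const _) (hreturns_integrable.const_mul _),
    integral_const_mul ((M : ℝ) ^ 2),
    integral_card_filter_mem _ hg fun _ => hW, hreturns_integral] at hint
  simp only [integral_const, probReal_univ, smul_eq_mul, one_mul, sum_product, sum_const,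
    nsmul_eq_mul] at hint
  rw [card_product, card_range, Nat.cast_mul, ← sq] at hint
  exact le_of_mul_le_mul_left (by linarith) hM

theorem exists_pos_eventually_le_avg_measureReal_returnSet (h₁ : MeasurePreserving S₁ μ μ)
    (h₂ : MeasurePreserving S₂ μ μ) (hc : Function.Commute S₁ S₂) (hW : MeasurableSet W)
    (hW0 : 0 < μ W) :
    ∃ c > 0, ∀ᶠ N : ℕ in atTop, c ≤ 1 / (N : ℝ) * ∑ n ∈ range N, μ.real (returnSet S₁ S₂ W n) := by
  have hW' : 0 < μ.real W := ENNReal.toReal_pos hW0.ne' (measure_ne_top μ W)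
  set M := cornersTheoremBound ((μ.real W / 2) ^ 2 / 4 / 9)
  have hM : (0 : ℝ) < M := by simp only [M, cornersTheoremBound]; positivity
  set δ := μ.real W / (2 * M ^ 2)
  have hδ : 0 < δ := by positivity
  have hblock t : δ ≤ ∑ d ∈ Icc 1 M, μ.real (returnSet S₁ S₂ W (t * d)) := by
    have := measureReal_le_add_sum_returnSet (h₁.iterate t) (h₂.iterate t)
      (hc.iterate_iterate t t) hW (δ := μ.real W / 2) fun A hA hAε =>
        oriented_corners_theorem_nat (by positivity) le_rfl A hA hAε
    rw [div_le_iff₀ (by positivity)]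
    simp only [returnSet_iterate] at this
    linarith
  refine ⟨δ / (2 * M ^ 2), by positivity, (eventually_gt_atTop M).mono fun N hMN => ?_⟩
  have hN : (0 : ℝ) < N := by exact_mod_cast (Nat.zero_le M).trans_lt hMN
  have := mul_le_mul_sum_range_of_le_sum_Icc_mul (fun _ => measureReal_nonneg) hδ.le hblock hMN
  rw [one_div_mul_eq_div, div_le_div_iff₀ (by positivity) hN]
  linarith

end Recurrence

section Averages

variable {X : Type*}

noncomputable def multipleErgodicAverage (T₁ T₂ : X → X) (V : Set X) (N : ℕ) (x : X) : ℝ :=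
  1 / (N : ℝ) * ∑ n ∈ Finset.range N,
    V.indicator (fun _ => (1 : ℝ)) (T₁^[n] x) * V.indicator (fun _ => (1 : ℝ)) (T₂^[n] x)

lemma multipleErgodicAverage_eq (T₁ T₂ : X → X) (V : Set X) (N : ℕ) :
    multipleErgodicAverage T₁ T₂ V N =
      fun x => 1 / (N : ℝ) * ∑ n ∈ range N, (T₁^[n] ⁻¹' V ∩ T₂^[n] ⁻¹' V).indicator 1 x := by
  ext x
  simp only [multipleErgodicAverage, Set.inter_indicator_one, Pi.mul_apply]
  rfl

variable [MeasurableSpace X] {μ : Measure X} [IsFiniteMeasure μ]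

lemma integrable_multipleErgodicAverage {T₁ T₂ : X → X} {V : Set X}
    (h₁ : Measurable T₁) (h₂ : Measurable T₂) (hV : MeasurableSet V) (N : ℕ) :
    Integrable (multipleErgodicAverage T₁ T₂ V N) μ := by
  rw [multipleErgodicAverage_eq]
  exact (integrable_finsetSum _ fun n _ =>
    (integrable_const 1).indicator ((h₁.iterate n hV).inter (h₂.iterate n hV))).const_mul _

lemma avg_measureReal_returnSet_le_setIntegral {T₁ T₂ : X → X} {V W : Set X}
    (h₁ : Measurable T₁) (h₂ : Measurable T₂) (hV : MeasurableSet V) (hWV : W ⊆ V) (N : ℕ) :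
    1 / (N : ℝ) * ∑ n ∈ range N, μ.real (returnSet T₁ T₂ W n) ≤
      ∫ x in W, multipleErgodicAverage T₁ T₂ V N x ∂μ := by
  have hD n : MeasurableSet (T₁^[n] ⁻¹' V ∩ T₂^[n] ⁻¹' V) :=
    (h₁.iterate n hV).inter (h₂.iterate n hV)
  rw [multipleErgodicAverage_eq, integral_const_mul,
    integral_finsetSum _ fun n _ => (integrable_const 1).indicator (hD n)]
  gcongr with n
  rw [integral_indicator_one (hD n), measureReal_restrict_apply (hD n)]
  exact measureReal_mono fun x ⟨⟨hxW, h1⟩, h2⟩ => ⟨⟨hWV h1, hWV h2⟩, hxW⟩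

end Averages

theorem limit_function_pos_on_set_general
    {X : Type*} [MeasurableSpace X] (μ : Measure X) [IsProbabilityMeasure μ]
    (T₁ T₂ : Equiv.Perm X)
    (hT₁ : MeasurePreserving T₁ μ μ) (hT₂ : MeasurePreserving T₂ μ μ)
    (hcomm : ∀ x, T₁ (T₂ x) = T₂ (T₁ x))
    (V : Set X) (hV : MeasurableSet V)
    (R : X → ℝ) (hR : Integrable R μ)
    (hlim : Tendsto (fun N : ℕ => ∫ x,
        |(1 / (N : ℝ)) * ∑ n ∈ Finset.range N,
            (V.indicator (fun _ => (1 : ℝ)) ((⇑T₁)^[n] x)) *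
            (V.indicator (fun _ => (1 : ℝ)) ((⇑T₂)^[n] x)) - R x| ∂μ)
      atTop (𝓝 0)) :
    ∀ᵐ x ∂(μ.restrict V), 0 < R x := by
  refine ae_restrict_pos_of_forall_setIntegral_pos hR.1 hV fun W hWV hW hW0 => ?_
  obtain ⟨c, hc, hev⟩ := exists_pos_eventually_le_avg_measureReal_returnSet hT₁ hT₂ hcomm hW hW0
  have hconv := tendsto_setIntegral_of_tendsto_integral_abs_sub
    (integrable_multipleErgodicAverage hT₁.measurable hT₂.measurable hV) hR hlim W
  refine hc.trans_le (ge_of_tendsto hconv ?_)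
  filter_upwards [hev] with N hN using
    hN.trans (avg_measureReal_returnSet_le_setIntegral hT₁.measurable hT₂.measurable hV hWV N)

/-- (Furstenberg–Katznelson positivity consequence.) If `T₁, T₂` are commuting invertible
measure preserving transformations, `V` has positive measure and `R` is the `L¹(μ)`-limit
of the averages `(1/N) ∑_{n<N} 1_V(T₁ⁿ x) 1_V(T₂ⁿ x)`, then `R > 0` μ-a.e. on `V`. -/
theorem limit_function_pos_on_set
    {X : Type*} [MeasurableSpace X] (μ : Measure X) [IsProbabilityMeasure μ]
    (T₁ T₂ : Equiv.Perm X)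
    (hT₁m : Measurable T₁) (hT₁m' : Measurable T₁.symm)
    (hT₂m : Measurable T₂) (hT₂m' : Measurable T₂.symm)
    (hT₁ : MeasurePreserving T₁ μ μ) (hT₂ : MeasurePreserving T₂ μ μ)
    (hcomm : ∀ x, T₁ (T₂ x) = T₂ (T₁ x))
    (V : Set X) (hV : MeasurableSet V) (hVpos : 0 < μ V)
    (R : X → ℝ) (hR : Integrable R μ)
    (hlim : Tendsto (fun N : ℕ => ∫ x,
        |(1 / (N : ℝ)) * ∑ n ∈ Finset.range N,
            (V.indicator (fun _ => (1 : ℝ)) ((⇑T₁)^[n] x)) *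
            (V.indicator (fun _ => (1 : ℝ)) ((⇑T₂)^[n] x)) - R x| ∂μ)
      atTop (𝓝 0)) :
    ∀ᵐ x ∂(μ.restrict V), 0 < R x :=
  limit_function_pos_on_set_general μ T₁ T₂ hT₁ hT₂ hcomm V hV R hR hlim
end
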